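/- arXiv:math/0005243 — 7 statements merged into one kernel-verified Lean document; each statement's English description precedes it below -/
import Mathlib

section
/- Let 0<q<1 and let F21, F12, F22 be the self-maps of R^3 given by F21(x1,x2,x3)=(q^2 x1-(1-q^2)(x3-1), x2, x3), F12(x1,x2,x3)=(x1, q^2 x2-(1-q^2)(x3-1), x3), F22(x1,x2,x3)=(q^2 x1, q^2 x2, q^2(x3-1)+1). Then these three maps pairwise commute. -/
/-- `F21(x₁,x₂,x₃) = (q²x₁-(1-q²)(x₃-1), x₂, x₃)`. -/
def F21 (q : ℝ) : ℝ × ℝ × ℝ → ℝ × ℝ × ℝ :=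
  fun p => (q ^ 2 * p.1 - (1 - q ^ 2) * (p.2.2 - 1), p.2.1, p.2.2)

/-- `F12(x₁,x₂,x₃) = (x₁, q²x₂-(1-q²)(x₃-1), x₃)`. -/
def F12 (q : ℝ) : ℝ × ℝ × ℝ → ℝ × ℝ × ℝ :=
  fun p => (p.1, q ^ 2 * p.2.1 - (1 - q ^ 2) * (p.2.2 - 1), p.2.2)

/-- `F22(x₁,x₂,x₃) = (q²x₁, q²x₂, q²(x₃-1)+1)`. -/
def F22 (q : ℝ) : ℝ × ℝ × ℝ → ℝ × ℝ × ℝ :=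
  fun p => (q ^ 2 * p.1, q ^ 2 * p.2.1, q ^ 2 * (p.2.2 - 1) + 1)

theorem stmt_2 (q : ℝ) (hq0 : 0 < q) (hq1 : q < 1) :
    F21 q ∘ F12 q = F12 q ∘ F21 q ∧
    F21 q ∘ F22 q = F22 q ∘ F21 q ∧
    F12 q ∘ F22 q = F22 q ∘ F12 q := by
  refine ⟨?_, ?_, ?_⟩ <;> funext p <;> simp [F21, F12, F22, Function.comp] <;> ring
end

section
/- Let 0<q<1 and suppose (x1,x2,x3) lies in ([0,∞))^3 with x3 = 0, and suppose the full orbit {F21^(m) F12^(l) F22^(k) (x1,x2,0) : m,l,k in Z} intersected with ([0,∞))^3 is bounded. Then x1 <= 1 and x2 <= 1. In particular, if moreover every point of the orbit lying in ([0,∞))^3 must have all coordinates bounded by a fixed constant, then the only possible orbits through points with nonnegative coordinates closed under the dynamics are those of (1,1,0), (1,0,0), (0,1,0), (0,0,0). -/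
/-- `F21` as a bijection of `ℝ³` (for `q ≠ 0`), with inverse given by replacing `q²`
by `q⁻²`. -/
noncomputable def F21e (q : ℝ) (hq : q ≠ 0) : Equiv.Perm (ℝ × ℝ × ℝ) where
  toFun p := (q ^ 2 * p.1 - (1 - q ^ 2) * (p.2.2 - 1), p.2.1, p.2.2)
  invFun p := (q⁻¹ ^ 2 * p.1 - (1 - q⁻¹ ^ 2) * (p.2.2 - 1), p.2.1, p.2.2)
  left_inv := by
    rintro ⟨a, b, c⟩
    simp only [Prod.mk.injEq, and_true, true_and]
    field_simp
    ring
  right_inv := by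
    rintro ⟨a, b, c⟩
    simp only [Prod.mk.injEq, and_true, true_and]
    field_simp
    ring

/-- `F12` as a bijection of `ℝ³` (for `q ≠ 0`). -/
noncomputable def F12e (q : ℝ) (hq : q ≠ 0) : Equiv.Perm (ℝ × ℝ × ℝ) where
  toFun p := (p.1, q ^ 2 * p.2.1 - (1 - q ^ 2) * (p.2.2 - 1), p.2.2)
  invFun p := (p.1, q⁻¹ ^ 2 * p.2.1 - (1 - q⁻¹ ^ 2) * (p.2.2 - 1), p.2.2)
  left_inv := by
    rintro ⟨a, b, c⟩
    simp only [Prod.mk.injEq, and_true, true_and]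
    field_simp
    ring
  right_inv := by
    rintro ⟨a, b, c⟩
    simp only [Prod.mk.injEq, and_true, true_and]
    field_simp
    ring

/-- `F22` as a bijection of `ℝ³` (for `q ≠ 0`). -/
noncomputable def F22e (q : ℝ) (hq : q ≠ 0) : Equiv.Perm (ℝ × ℝ × ℝ) where
  toFun p := (q ^ 2 * p.1, q ^ 2 * p.2.1, q ^ 2 * (p.2.2 - 1) + 1)
  invFun p := (q⁻¹ ^ 2 * p.1, q⁻¹ ^ 2 * p.2.1, q⁻¹ ^ 2 * (p.2.2 - 1) + 1)
  left_inv := by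
    rintro ⟨a, b, c⟩
    simp only [Prod.mk.injEq]
    refine ⟨?_, ?_, ?_⟩ <;> (field_simp; try ring)
  right_inv := by
    rintro ⟨a, b, c⟩
    simp only [Prod.mk.injEq]
    refine ⟨?_, ?_, ?_⟩ <;> (field_simp; try ring)



lemma iter21 (q : ℝ) (hq : q ≠ 0) (x2 : ℝ) :
    ∀ n : ℕ, ∀ x1 : ℝ, (F21e q hq ^ (-(n : ℤ))) (x1, x2, (0:ℝ)) =
      ((q⁻¹ ^ 2) ^ n * (x1 - 1) + 1, x2, 0) := by
  intro n
  induction n with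
  | zero => intro x1; simp
  | succ n ih =>
    intro x1
    have h : (-(↑(n + 1)) : ℤ) = (-(n : ℤ)) + (-1) := by push_cast; ring
    rw [h, zpow_add, Equiv.Perm.mul_apply]
    have h1 : (F21e q hq ^ (-1 : ℤ)) (x1, x2, (0:ℝ)) =
        (q⁻¹ ^ 2 * (x1 - 1) + 1, x2, 0) := by
      rw [zpow_neg_one]
      show ((F21e q hq)⁻¹ : Equiv.Perm (ℝ × ℝ × ℝ)) (x1, x2, (0:ℝ)) = _
      have : ((F21e q hq)⁻¹ : Equiv.Perm (ℝ × ℝ × ℝ)) (x1, x2, (0:ℝ)) =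
          (q⁻¹ ^ 2 * x1 - (1 - q⁻¹ ^ 2) * ((0:ℝ) - 1), x2, 0) := rfl
      rw [this]; congr 1; ring
    rw [h1, ih]
    congr 1
    ring

lemma iter12 (q : ℝ) (hq : q ≠ 0) (x1 : ℝ) :
    ∀ n : ℕ, ∀ x2 : ℝ, (F12e q hq ^ (-(n : ℤ))) (x1, x2, (0:ℝ)) =
      (x1, (q⁻¹ ^ 2) ^ n * (x2 - 1) + 1, 0) := by
  intro n
  induction n with
  | zero => intro x2; simp
  | succ n ih =>
    intro x2
    have h : (-(↑(n + 1)) : ℤ) = (-(n : ℤ)) + (-1) := by push_cast; ring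
    rw [h, zpow_add, Equiv.Perm.mul_apply]
    have h1 : (F12e q hq ^ (-1 : ℤ)) (x1, x2, (0:ℝ)) =
        (x1, q⁻¹ ^ 2 * (x2 - 1) + 1, 0) := by
      rw [zpow_neg_one]
      have : ((F12e q hq)⁻¹ : Equiv.Perm (ℝ × ℝ × ℝ)) (x1, x2, (0:ℝ)) =
          (x1, q⁻¹ ^ 2 * x2 - (1 - q⁻¹ ^ 2) * ((0:ℝ) - 1), 0) := rfl
      rw [this]; congr 2; ring
    rw [h1, ih]
    congr 2
    ring

/-- If the orbit of `(x₁,x₂,0)` (with `x₁,x₂ ≥ 0`) under the group generated by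
`F21, F12, F22` meets the nonnegative octant in a bounded set, then `x₁ ≤ 1` and
`x₂ ≤ 1`. -/
theorem stmt_6 (q : ℝ) (hq0 : 0 < q) (hq1 : q < 1) (x1 x2 : ℝ)
    (hx1 : 0 ≤ x1) (hx2 : 0 ≤ x2)
    (hb : Bornology.IsBounded
      ({p : ℝ × ℝ × ℝ | ∃ m l k : ℤ,
          p = (F21e q hq0.ne' ^ m) ((F12e q hq0.ne' ^ l) ((F22e q hq0.ne' ^ k) (x1, x2, 0)))}
        ∩ {p : ℝ × ℝ × ℝ | 0 ≤ p.1 ∧ 0 ≤ p.2.1 ∧ 0 ≤ p.2.2})) :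
    x1 ≤ 1 ∧ x2 ≤ 1 := by
  obtain ⟨R, hR⟩ := isBounded_iff_forall_norm_le.1 hb
  have hq := hq0.ne'
  have hcpos : (0:ℝ) < q⁻¹ ^ 2 := by positivity
  have hc1 : 1 < q⁻¹ ^ 2 := by
    have h1 : 1 < q⁻¹ := (one_lt_inv₀ hq0).2 hq1
    nlinarith
  constructor
  · by_contra hcon
    push_neg at hcon
    have hx : 0 < x1 - 1 := by linarith
    obtain ⟨n, hn⟩ := pow_unbounded_of_one_lt (R / (x1 - 1)) hc1
    set p : ℝ × ℝ × ℝ := ((q⁻¹ ^ 2) ^ n * (x1 - 1) + 1, x2, 0) with hp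
    have hmem : p ∈ ({p : ℝ × ℝ × ℝ | ∃ m l k : ℤ,
          p = (F21e q hq0.ne' ^ m) ((F12e q hq0.ne' ^ l) ((F22e q hq0.ne' ^ k) (x1, x2, 0)))}
        ∩ {p : ℝ × ℝ × ℝ | 0 ≤ p.1 ∧ 0 ≤ p.2.1 ∧ 0 ≤ p.2.2}) := by
      constructor
      · refine ⟨-(n : ℤ), 0, 0, ?_⟩
        simp only [zpow_zero, Equiv.Perm.coe_one, id_eq]
        rw [iter21]
      · refine ⟨?_, hx2, le_refl 0⟩
        have : 0 ≤ (q⁻¹ ^ 2) ^ n * (x1 - 1) := by positivity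
        simp only [hp]; linarith
    have hle := hR p hmem
    have h1 : |p.1| ≤ ‖p‖ := norm_fst_le p
    have h2 : p.1 ≤ |p.1| := le_abs_self _
    have h3 : R < p.1 := by
      have := (div_lt_iff₀ hx).1 hn
      simp only [hp]
      linarith
    linarith
  · by_contra hcon
    push_neg at hcon
    have hx : 0 < x2 - 1 := by linarith
    obtain ⟨n, hn⟩ := pow_unbounded_of_one_lt (R / (x2 - 1)) hc1
    set p : ℝ × ℝ × ℝ := (x1, (q⁻¹ ^ 2) ^ n * (x2 - 1) + 1, 0) with hp
    have hmem : p ∈ ({p : ℝ × ℝ × ℝ | ∃ m l k : ℤ,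
          p = (F21e q hq0.ne' ^ m) ((F12e q hq0.ne' ^ l) ((F22e q hq0.ne' ^ k) (x1, x2, 0)))}
        ∩ {p : ℝ × ℝ × ℝ | 0 ≤ p.1 ∧ 0 ≤ p.2.1 ∧ 0 ≤ p.2.2}) := by
      constructor
      · refine ⟨0, -(n : ℤ), 0, ?_⟩
        simp only [zpow_zero, Equiv.Perm.coe_one, id_eq]
        rw [iter12]
      · refine ⟨hx1, ?_, le_refl 0⟩
        have : 0 ≤ (q⁻¹ ^ 2) ^ n * (x2 - 1) := by positivity
        simp only [hp]; linarith
    have hle := hR p hmem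
    have h1 : |p.2.1| ≤ ‖p‖ := le_trans (norm_fst_le p.2) (norm_snd_le p)
    have h2 : p.2.1 ≤ |p.2.1| := le_abs_self _
    have h3 : R < p.2.1 := by
      have := (div_lt_iff₀ hx).1 hn
      simp only [hp]
      linarith
    linarith
end

section
/- Let 0<q<1 and let a be a bounded operator on a complex Hilbert space satisfying a* a = q^2 a a* + (1-q^2)·I. Then a a* >= 0 and the spectrum of a a* is contained in [0, 1]; in particular ||a|| <= 1. -/
open ContinuousLinearMap

theorem stmt_9 (q : ℝ) (hq0 : 0 < q) (hq1 : q < 1)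
    {H : Type*} [NormedAddCommGroup H] [InnerProductSpace ℂ H] [CompleteSpace H]
    (a : H →L[ℂ] H)
    (h : adjoint a * a = ((q : ℂ) ^ 2) • (a * adjoint a) + (1 - (q : ℂ) ^ 2) • 1) :
    (a * adjoint a).IsPositive ∧
    spectrum ℂ (a * adjoint a) ⊆ {z : ℂ | ∃ t : ℝ, z = (t : ℂ) ∧ 0 ≤ t ∧ t ≤ 1} ∧
    ‖a‖ ≤ 1 := by
  have hpos : (a * adjoint a).IsPositive := by
    have := (isPositive_one (E := H) (𝕜 := ℂ)).conj_adjoint a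
    convert this using 1; ext x; simp
  have hadj : ∀ b : H →L[ℂ] H, ‖adjoint b‖ = ‖b‖ := fun b => by
    rw [← star_eq_adjoint, norm_star]
  have h2 : ‖a * adjoint a‖ = ‖a‖ * ‖a‖ := by
    have := norm_adjoint_comp_self (adjoint a)
    rwa [adjoint_adjoint, hadj] at this
  -- norm bound
  have hnorm : ‖a‖ ≤ 1 := by
    have h1 : ‖adjoint a * a‖ = ‖a‖ * ‖a‖ := norm_adjoint_comp_self a
    have hle : ‖a‖ * ‖a‖ ≤ q ^ 2 * (‖a‖ * ‖a‖) + (1 - q ^ 2) := by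
      calc ‖a‖ * ‖a‖ = ‖adjoint a * a‖ := h1.symm
        _ = ‖((q : ℂ) ^ 2) • (a * adjoint a) + (1 - (q : ℂ) ^ 2) • 1‖ := by rw [h]
        _ ≤ ‖((q : ℂ) ^ 2)‖ * ‖a * adjoint a‖ + ‖(1 - (q : ℂ) ^ 2)‖ * ‖(1 : H →L[ℂ] H)‖ :=
            le_trans (norm_add_le _ _) (add_le_add (norm_smul_le _ _) (norm_smul_le _ _))
        _ ≤ q ^ 2 * (‖a‖ * ‖a‖) + (1 - q ^ 2) := by
            rw [h2]
            gcongr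
            · simp [abs_of_nonneg hq0.le]
            · have h1q : (0:ℝ) ≤ 1 - q ^ 2 := by nlinarith
              have hc : ‖(1 : ℂ) - (q : ℂ) ^ 2‖ = 1 - q ^ 2 := by
                rw [show (1 : ℂ) - (q : ℂ) ^ 2 = ((1 - q ^ 2 : ℝ) : ℂ) by push_cast; ring,
                  Complex.norm_real, Real.norm_of_nonneg h1q]
              calc ‖1 - (q:ℂ) ^ 2‖ * ‖(1 : H →L[ℂ] H)‖ ≤ (1 - q ^ 2) * 1 := by
                    rw [hc]; gcongr; exact norm_id_le
                _ = 1 - q ^ 2 := mul_one _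
    have hq2 : (0:ℝ) < 1 - q ^ 2 := by nlinarith
    have hsq : ‖a‖ * ‖a‖ ≤ 1 := by nlinarith
    nlinarith [norm_nonneg a]
  refine ⟨hpos, ?_, hnorm⟩
  intro z hz
  have hnn : (0 : H →L[ℂ] H) ≤ a * adjoint a := (nonneg_iff_isPositive _).mpr hpos
  have hre : z = z.re := hpos.isSelfAdjoint.mem_spectrum_eq_re hz
  have hmem : (z.re : ℝ) ∈ spectrum ℝ (a * adjoint a) := by
    rw [← spectrum.algebraMap_mem_iff ℂ]
    simpa using hre ▸ hz
  have h0 : 0 ≤ z.re := spectrum_nonneg_of_nonneg hnn hmem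
  have hle : z.re ≤ 1 := by
    have hnt : Nontrivial H := by
      rcases subsingleton_or_nontrivial H with hs | hs
      · exact absurd hz (by
          have : Subsingleton (H →L[ℂ] H) := ⟨fun f g => by ext x; exact Subsingleton.elim _ _⟩
          simp [spectrum, Set.mem_setOf_eq, resolventSet, isUnit_of_subsingleton]; exact Subsingleton.elim _ _)
      · exact hs
    have := spectrum.norm_le_norm_of_mem hz
    have hN : ‖a * adjoint a‖ ≤ 1 := by
      rw [h2]; nlinarith [norm_nonneg a]
    have habs : ‖z‖ = |z.re| := by rw [hre]; simp
    rw [habs, abs_of_nonneg h0] at this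
    linarith
  exact ⟨z.re, hre, h0, hle⟩
end

section
/- Let 0<q<1 and φ1, φ2 real. Define operators on l^2(Z≥0) by Z11 e_k = -e^(i(φ1+φ2)) q^(-1) sqrt(1-q^(2k)) e_{k-1} (with Z11 e_0 = 0), Z21 e_k = e^(i φ1) q^k e_k, Z12 e_k = e^(i φ2) q^k e_k, Z22 e_k = sqrt(1-q^(2(k+1))) e_{k+1}. Then these bounded operators satisfy all defining relations of Pol(Mat_{2,2})_q (with * the Hilbert-space adjoint); in particular they verify z11* z11 = q^2 z11 z11* - (1-q^2)(z21 z21* + z12 z12*) + q^(-2)(1-q^2)^2 z22 z22* + (1-q^2). -/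
open ContinuousLinearMap

variable {H : Type*} [NormedAddCommGroup H] [InnerProductSpace ℂ H] [CompleteSpace H]

/-- The defining relations (1)–(3) of `Pol(Mat₂,₂)_q` for a quadruple of bounded
operators on a Hilbert space (`*` is the Hilbert-space adjoint). -/
def IsPolRep (q : ℝ) (z11 z21 z12 z22 : H →L[ℂ] H) : Prop :=
  z11 * z21 = (q : ℂ) • (z21 * z11) ∧
  z11 * z12 = (q : ℂ) • (z12 * z11) ∧
  z21 * z12 = z12 * z21 ∧
  z21 * z22 = (q : ℂ) • (z22 * z21) ∧
  z12 * z22 = (q : ℂ) • (z22 * z12) ∧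
  z11 * z22 - z22 * z11 = ((q : ℂ) - (q : ℂ)⁻¹) • (z12 * z21) ∧
  adjoint z11 * z11 = ((q : ℂ) ^ 2) • (z11 * adjoint z11)
    - (1 - (q : ℂ) ^ 2) • (z21 * adjoint z21 + z12 * adjoint z12)
    + ((q : ℂ)⁻¹ ^ 2 * (1 - (q : ℂ) ^ 2) ^ 2) • (z22 * adjoint z22)
    + (1 - (q : ℂ) ^ 2) • 1 ∧
  adjoint z21 * z21 = ((q : ℂ) ^ 2) • (z21 * adjoint z21)
    - (1 - (q : ℂ) ^ 2) • (z22 * adjoint z22) + (1 - (q : ℂ) ^ 2) • 1 ∧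
  adjoint z12 * z12 = ((q : ℂ) ^ 2) • (z12 * adjoint z12)
    - (1 - (q : ℂ) ^ 2) • (z22 * adjoint z22) + (1 - (q : ℂ) ^ 2) • 1 ∧
  adjoint z22 * z22 = ((q : ℂ) ^ 2) • (z22 * adjoint z22) + (1 - (q : ℂ) ^ 2) • 1 ∧
  adjoint z11 * z21 - (q : ℂ) • (z21 * adjoint z11)
    = ((q : ℂ) - (q : ℂ)⁻¹) • (z22 * adjoint z12) ∧
  adjoint z11 * z12 - (q : ℂ) • (z12 * adjoint z11)
    = ((q : ℂ) - (q : ℂ)⁻¹) • (z22 * adjoint z21) ∧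
  adjoint z11 * z22 = z22 * adjoint z11 ∧
  adjoint z22 * z21 = (q : ℂ) • (z21 * adjoint z22) ∧
  adjoint z22 * z12 = (q : ℂ) • (z12 * adjoint z22) ∧
  adjoint z21 * z12 = z12 * adjoint z21

/-- The standard orthonormal basis vector `e k` of `ℓ²(ℤ≥0)`. -/
noncomputable def e (k : ℕ) : lp (fun _ : ℕ => ℂ) 2 := lp.single 2 k 1


/-!
Each of the four operators is diagonal or a weighted shift in the basis `e k`, and so is its
adjoint. Evaluated on `e k`, every relation of `Pol(Mat₂,₂)_q` therefore becomes an identity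
between complex numbers, which follows from `|e^{iφ}| = 1` and
`√(1 - q^{2(k+1)})² = 1 - q^{2(k+1)}`.
-/

open scoped lp ComplexConjugate

theorem inner_e_left (j : ℕ) (f : ℓ²(ℕ, ℂ)) : inner ℂ (e j) f = f j := by
  simp [e, lp.inner_single_left]

theorem inner_e_e (j k : ℕ) : inner ℂ (e j) (e k) = if j = k then 1 else 0 := by
  rw [inner_e_left]
  simp [e, lp.single_apply, Pi.single_apply]

theorem ext_inner_e {x y : ℓ²(ℕ, ℂ)} (h : ∀ j, inner ℂ (e j) x = inner ℂ (e j) y) : x = y :=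
  lp.ext <| funext fun j => by simpa only [inner_e_left] using h j

theorem ContinuousLinearMap.ext_e {A B : ℓ²(ℕ, ℂ) →L[ℂ] ℓ²(ℕ, ℂ)}
    (h : ∀ k, A (e k) = B (e k)) : A = B :=
  lp.ext_continuousLinearMap ENNReal.ofNat_ne_top fun k => ContinuousLinearMap.ext_ring (h k)

section Adjoint

variable {A : ℓ²(ℕ, ℂ) →L[ℂ] ℓ²(ℕ, ℂ)} {c : ℕ → ℂ}

theorem adjoint_apply_e_of_diagonal (h : ∀ k, A (e k) = c k • e k) (k : ℕ) :
    adjoint A (e k) = conj (c k) • e k := by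
  refine ext_inner_e fun j => ?_
  rw [adjoint_inner_right, h, inner_smul_left, inner_smul_right, inner_e_e]
  split_ifs with hjk <;> simp [hjk]

theorem adjoint_apply_e_of_lowering (h0 : A (e 0) = 0) (h : ∀ k, A (e (k + 1)) = c k • e k)
    (k : ℕ) : adjoint A (e k) = conj (c k) • e (k + 1) := by
  refine ext_inner_e fun j => ?_
  rw [adjoint_inner_right, inner_smul_right, inner_e_e]
  rcases j with _ | j
  · simp [h0]
  · rw [h, inner_smul_left, inner_e_e]
    simp only [Nat.add_right_cancel_iff]
    split_ifs with hjk <;> simp [hjk]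

theorem adjoint_apply_e_zero_of_raising (h : ∀ k, A (e k) = c k • e (k + 1)) :
    adjoint A (e 0) = 0 :=
  ext_inner_e fun j => by simp [adjoint_inner_right, h, inner_smul_left, inner_e_e]

theorem adjoint_apply_e_succ_of_raising (h : ∀ k, A (e k) = c k • e (k + 1)) (k : ℕ) :
    adjoint A (e (k + 1)) = conj (c k) • e k := by
  refine ext_inner_e fun j => ?_
  rw [adjoint_inner_right, h, inner_smul_left, inner_smul_right, inner_e_e, inner_e_e]
  split_ifs with hjk <;> simp_all

end Adjoint

theorem isPolRep_of_apply_e (q : ℝ) (hq : q ≠ 0) (a b : ℂ) (ha : ‖a‖ = 1) (hb : ‖b‖ = 1)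
    (w : ℕ → ℝ) (hw : ∀ k, w k ^ 2 = 1 - q ^ (2 * (k + 1)))
    (Z11 Z21 Z12 Z22 : ℓ²(ℕ, ℂ) →L[ℂ] ℓ²(ℕ, ℂ)) (h11z : Z11 (e 0) = 0)
    (h11 : ∀ k, Z11 (e (k + 1)) = (-(a * b) * (q : ℂ)⁻¹ * w k) • e k)
    (h21 : ∀ k, Z21 (e k) = (a * q ^ k) • e k) (h12 : ∀ k, Z12 (e k) = (b * q ^ k) • e k)
    (h22 : ∀ k, Z22 (e k) = (w k : ℂ) • e (k + 1)) :
    IsPolRep q Z11 Z21 Z12 Z22 := by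
  have hwℂ (k : ℕ) : (w k : ℂ) ^ 2 = 1 - (q : ℂ) ^ (2 * (k + 1)) := by exact_mod_cast hw k
  have hqℂ : (q : ℂ) ≠ 0 := by exact_mod_cast hq
  have ha0 : a ≠ 0 := by rintro rfl; simp at ha
  have hb0 : b ≠ 0 := by rintro rfl; simp at hb
  have A11 := adjoint_apply_e_of_lowering h11z h11
  have A21 := adjoint_apply_e_of_diagonal h21
  have A12 := adjoint_apply_e_of_diagonal h12
  have A22z := adjoint_apply_e_zero_of_raising h22
  have A22 := adjoint_apply_e_succ_of_raising h22
  refine ⟨?_, ?_, ?_, ?_, ?_, ?_, ?_, ?_, ?_, ?_, ?_, ?_, ?_, ?_, ?_, ?_⟩ <;>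
    refine ContinuousLinearMap.ext_e fun k => ?_ <;> rcases k with _ | k <;>
    simp only [mul_apply_eq_comp, add_apply, sub_apply, smul_apply, one_apply_eq_self,
      h11z, h11, h21, h12, h22, A11, A21, A12, A22z, A22, map_smul, map_zero, smul_zero,
      map_mul, map_neg, map_inv₀, map_pow, Complex.conj_ofReal, ← Complex.inv_eq_conj ha,
      ← Complex.inv_eq_conj hb, smul_smul] <;>
    -- once `field_simp` has cleared `a⁻¹`, `b⁻¹`, `q⁻¹`, only `w k ^ 2` needs rewriting
    match_scalars <;> field_simp <;> ring_nf <;> simp only [hwℂ] <;> ring_nf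

theorem stmt_12 (q : ℝ) (hq0 : 0 < q) (hq1 : q < 1) (φ1 φ2 : ℝ)
    (Z11 Z21 Z12 Z22 : lp (fun _ : ℕ => ℂ) 2 →L[ℂ] lp (fun _ : ℕ => ℂ) 2)
    (h11z : Z11 (e 0) = 0)
    (h11 : ∀ k : ℕ, Z11 (e (k + 1)) =
      (-Complex.exp ((φ1 + φ2 : ℝ) * Complex.I) * (q : ℂ)⁻¹
        * (Real.sqrt (1 - q ^ (2 * (k + 1))) : ℂ)) • e k)
    (h21 : ∀ k : ℕ, Z21 (e k) = (Complex.exp (φ1 * Complex.I) * (q : ℂ) ^ k) • e k)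
    (h12 : ∀ k : ℕ, Z12 (e k) = (Complex.exp (φ2 * Complex.I) * (q : ℂ) ^ k) • e k)
    (h22 : ∀ k : ℕ, Z22 (e k) = (Real.sqrt (1 - q ^ (2 * (k + 1))) : ℂ) • e (k + 1)) :
    IsPolRep q Z11 Z21 Z12 Z22 := by
  have hexp : Complex.exp ((φ1 + φ2 : ℝ) * Complex.I)
      = Complex.exp (φ1 * Complex.I) * Complex.exp (φ2 * Complex.I) := by
    push_cast
    rw [add_mul, Complex.exp_add]
  have hsqrt (k : ℕ) : Real.sqrt (1 - q ^ (2 * (k + 1))) ^ 2 = 1 - q ^ (2 * (k + 1)) :=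
    Real.sq_sqrt (sub_nonneg.mpr (pow_le_one₀ hq0.le hq1.le))
  refine isPolRep_of_apply_e q hq0.ne' _ _ (Complex.norm_exp_ofReal_mul_I φ1)
    (Complex.norm_exp_ofReal_mul_I φ2) _ hsqrt Z11 Z21 Z12 Z22 h11z (fun k => ?_) h21 h12 h22
  rw [h11, hexp]
end

section
/- Let 0<q<1 and φ real. Define on l^2(Z≥0) the operators Z11 e_k = q^(-1) sqrt(1-q^(2(k+1))) e_{k+1}, Z21 = Z12 = 0, Z22 e_k = e^(i φ) e_k. Then these operators satisfy all the defining relations of Pol(Mat_{2,2})_q, and Z22 is unitary. -/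
open ContinuousLinearMap

variable {H : Type*} [NormedAddCommGroup H] [InnerProductSpace ℂ H] [CompleteSpace H]

open scoped InnerProductSpace


lemma inner_e (m : ℕ) (v : lp (fun _ : ℕ => ℂ) 2) : ⟪e m, v⟫_ℂ = v m := by
  simp [e, lp.inner_single_left]

lemma inner_e_e_s13 (m n : ℕ) : ⟪e m, e n⟫_ℂ = if m = n then 1 else 0 := by
  rw [inner_e]
  simp [e, lp.single_apply, Pi.single_apply, eq_comm]

lemma ext_vec {v w : lp (fun _ : ℕ => ℂ) 2}
    (h : ∀ m, ⟪e m, v⟫_ℂ = ⟪e m, w⟫_ℂ) : v = w := by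
  ext m
  have := h m
  rwa [inner_e, inner_e] at this

lemma ext_op {T S : lp (fun _ : ℕ => ℂ) 2 →L[ℂ] lp (fun _ : ℕ => ℂ) 2}
    (h : ∀ k, T (e k) = S (e k)) : T = S := by
  refine ContinuousLinearMap.ext fun f => ?_
  have hf := lp.hasSum_single (p := 2) (by norm_num) f
  have key : ∀ i : ℕ, lp.single 2 i (f i) = f i • e i := by
    intro i
    rw [e, ← lp.single_smul]
    norm_num
  have hT : HasSum (fun i : ℕ => T (f i • e i)) (T f) := by
    simpa [key] using (hf.mapL T)
  have hS : HasSum (fun i : ℕ => S (f i • e i)) (S f) := by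
    simpa [key] using (hf.mapL S)
  refine hT.unique ?_
  convert hS using 2 with i
  simp [h i]

set_option maxHeartbeats 1000000 in
theorem stmt_13 (q : ℝ) (hq0 : 0 < q) (hq1 : q < 1) (φ : ℝ)
    (Z11 Z21 Z12 Z22 : lp (fun _ : ℕ => ℂ) 2 →L[ℂ] lp (fun _ : ℕ => ℂ) 2)
    (h11 : ∀ k : ℕ, Z11 (e k) =
      ((q : ℂ)⁻¹ * (Real.sqrt (1 - q ^ (2 * (k + 1))) : ℂ)) • e (k + 1))
    (h21 : Z21 = 0) (h12 : Z12 = 0)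
    (h22 : ∀ k : ℕ, Z22 (e k) = Complex.exp (φ * Complex.I) • e k) :
    IsPolRep q Z11 Z21 Z12 Z22 ∧
    Z22 * adjoint Z22 = 1 ∧ adjoint Z22 * Z22 = 1 := by
  subst h21 h12
  have hqne : q ≠ 0 := hq0.ne'
  set u : ℂ := Complex.exp (φ * Complex.I) with hu
  -- Z22 is the scalar u
  have hZ22 : Z22 = u • (1 : lp (fun _ : ℕ => ℂ) 2 →L[ℂ] lp (fun _ : ℕ => ℂ) 2) :=
    ext_op fun k => by simp [h22 k]
  have hconj : (starRingEnd ℂ) u = Complex.exp (-(φ * Complex.I)) := by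
    rw [hu, ← Complex.exp_conj]
    congr 1
    simp [Complex.conj_ofReal]
  have huu : u * (starRingEnd ℂ) u = 1 := by
    rw [hconj, hu, ← Complex.exp_add]
    simp
  have huu' : (starRingEnd ℂ) u * u = 1 := by rw [mul_comm]; exact huu
  have hA22 : adjoint Z22 = (starRingEnd ℂ) u • (1 : lp (fun _ : ℕ => ℂ) 2 →L[ℂ] lp (fun _ : ℕ => ℂ) 2) := by
    rw [hZ22, ← star_eq_adjoint, star_smul, star_one]
    rfl
  have hA0 : adjoint (0 : lp (fun _ : ℕ => ℂ) 2 →L[ℂ] lp (fun _ : ℕ => ℂ) 2) = 0 := by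
    rw [← star_eq_adjoint, star_zero]
  have hZZ : Z22 * adjoint Z22 = 1 := by
    rw [hA22, hZ22, smul_mul_assoc, mul_smul_comm, one_mul, smul_smul, huu, one_smul]
  have hZZ' : adjoint Z22 * Z22 = 1 := by
    rw [hA22, hZ22, smul_mul_assoc, mul_smul_comm, one_mul, smul_smul, huu', one_smul]
  -- the coefficient of the weighted shift
  set c : ℕ → ℝ := fun k => q⁻¹ * Real.sqrt (1 - q ^ (2 * (k + 1))) with hc
  have h11' : ∀ k, Z11 (e k) = ((c k : ℝ) : ℂ) • e (k + 1) := by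
    intro k
    rw [h11 k, hc]
    push_cast
    ring_nf
  have hnn : ∀ n : ℕ, (0 : ℝ) ≤ 1 - q ^ n := fun n =>
    sub_nonneg.mpr (pow_le_one₀ hq0.le hq1.le)
  have csq : ∀ k, (c k) ^ 2 = q⁻¹ ^ 2 * (1 - q ^ (2 * (k + 1))) := by
    intro k
    rw [hc, mul_pow, Real.sq_sqrt (hnn _)]
  -- adjoint of Z11 on the basis
  have hadj0 : adjoint Z11 (e 0) = 0 := by
    refine ext_vec fun m => ?_
    rw [adjoint_inner_right, h11' m, inner_smul_left, inner_e_e_s13]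
    simp
  have hadjS : ∀ k, adjoint Z11 (e (k + 1)) = ((c k : ℝ) : ℂ) • e k := by
    intro k
    refine ext_vec fun m => ?_
    rw [adjoint_inner_right, h11' m, inner_smul_left, inner_e_e_s13, inner_smul_right, inner_e_e_s13]
    by_cases h : m = k
    · simp [h, Complex.conj_ofReal]
    · simp [h]
  -- the key scalar identities
  have hinv : q⁻¹ ^ 2 * q ^ 2 = 1 := by
    field_simp
  have r0 : (c 0 : ℝ) ^ 2 = q⁻¹ ^ 2 * (1 - q ^ 2) ^ 2 + (1 - q ^ 2) := by
    rw [csq 0]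
    linear_combination (1 - q ^ 2) * hinv
  have rS : ∀ k, (c (k + 1)) ^ 2 = q ^ 2 * (c k) ^ 2 + q⁻¹ ^ 2 * (1 - q ^ 2) ^ 2 + (1 - q ^ 2) := by
    intro k
    rw [csq, csq]
    linear_combination (1 - q ^ 2) * hinv
  refine ⟨⟨?_, ?_, ?_, ?_, ?_, ?_, ?_, ?_, ?_, ?_, ?_, ?_, ?_, ?_, ?_, ?_⟩, hZZ, hZZ'⟩
  · simp
  · simp
  · simp
  · simp
  · simp
  · rw [hZ22, mul_smul_comm, smul_mul_assoc, one_mul, mul_one]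
    simp
  · -- the main relation: adjoint Z11 * Z11 = ...
    have key : adjoint Z11 * Z11 = ((q : ℂ) ^ 2) • (Z11 * adjoint Z11)
        + (((q : ℂ)⁻¹ ^ 2 * (1 - (q : ℂ) ^ 2) ^ 2) + (1 - (q : ℂ) ^ 2)) • 1 := by
      refine ext_op fun k => ?_
      cases k with
      | zero =>
        have : ((c 0 : ℝ) : ℂ) ^ 2 = (q : ℂ)⁻¹ ^ 2 * (1 - (q : ℂ) ^ 2) ^ 2 + (1 - (q : ℂ) ^ 2) := by
          exact_mod_cast congrArg (Complex.ofReal) r0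
        simp only [ContinuousLinearMap.mul_apply, ContinuousLinearMap.add_apply,
          ContinuousLinearMap.smul_apply, ContinuousLinearMap.one_apply, h11' 0, map_smul,
          hadjS 0, hadj0, smul_smul, smul_zero, map_zero]
        rw [← sq, this, zero_add]
      | succ k =>
        have : ((c (k+1) : ℝ) : ℂ) ^ 2 = (q : ℂ) ^ 2 * ((c k : ℝ) : ℂ) ^ 2
            + (q : ℂ)⁻¹ ^ 2 * (1 - (q : ℂ) ^ 2) ^ 2 + (1 - (q : ℂ) ^ 2) := by
          exact_mod_cast congrArg Complex.ofReal (rS k)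
        simp only [ContinuousLinearMap.mul_apply, ContinuousLinearMap.add_apply,
          ContinuousLinearMap.smul_apply, ContinuousLinearMap.one_apply, h11' (k+1), map_smul,
          hadjS (k+1), hadjS k, h11' k, smul_smul]
        rw [← sq, this, ← sq]
        module
    rw [key, hA0, hZZ]
    simp only [mul_zero, zero_add, smul_zero, sub_zero, add_smul]
    abel
  · rw [hA0, hZZ]
    simp only [zero_mul, mul_zero, smul_zero, zero_sub, smul_zero]
    module
  · rw [hA0, hZZ]
    simp only [zero_mul, mul_zero, smul_zero, zero_sub, smul_zero]
    module
  · rw [hZZ', hZZ, ← add_smul]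
    rw [show (q:ℂ)^2 + (1 - (q:ℂ)^2) = 1 by ring, one_smul]
  · simp [hA0]
  · simp [hA0]
  · rw [hZ22, mul_smul_comm, smul_mul_assoc, one_mul, mul_one]
  · simp
  · simp
  · simp [hA0]
end

section
/- In the *-algebra Pol(Mat_{2,2})_q, the elements z21 z21*, z12 z12*, z22 z22* pairwise commute. -/
/-- A realization of the generators and defining relations (1)–(3) of the
`*`-algebra `Pol(Mat₂,₂)_q` in a unital complex `*`-algebra `A`.  A statement
holds in `Pol(Mat₂,₂)_q` iff it holds for every such realization. -/
structure PolMat22 (q : ℝ) (A : Type*) [Ring A] [Algebra ℂ A] [StarRing A]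
    [StarModule ℂ A] where
  z11 : A
  z21 : A
  z12 : A
  z22 : A
  rel_a1 : z11 * z21 = (q : ℂ) • (z21 * z11)
  rel_a2 : z11 * z12 = (q : ℂ) • (z12 * z11)
  rel_a3 : z21 * z12 = z12 * z21
  rel_a4 : z21 * z22 = (q : ℂ) • (z22 * z21)
  rel_a5 : z12 * z22 = (q : ℂ) • (z22 * z12)
  rel_a6 : z11 * z22 - z22 * z11 = ((q : ℂ) - (q : ℂ)⁻¹) • (z12 * z21)
  rel_b1 : star z11 * z11 = ((q : ℂ) ^ 2) • (z11 * star z11)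
    - (1 - (q : ℂ) ^ 2) • (z21 * star z21 + z12 * star z12)
    + ((q : ℂ)⁻¹ ^ 2 * (1 - (q : ℂ) ^ 2) ^ 2) • (z22 * star z22)
    + (1 - (q : ℂ) ^ 2) • (1 : A)
  rel_b2 : star z21 * z21 = ((q : ℂ) ^ 2) • (z21 * star z21)
    - (1 - (q : ℂ) ^ 2) • (z22 * star z22) + (1 - (q : ℂ) ^ 2) • (1 : A)
  rel_b3 : star z12 * z12 = ((q : ℂ) ^ 2) • (z12 * star z12)
    - (1 - (q : ℂ) ^ 2) • (z22 * star z22) + (1 - (q : ℂ) ^ 2) • (1 : A)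
  rel_b4 : star z22 * z22 = ((q : ℂ) ^ 2) • (z22 * star z22) + (1 - (q : ℂ) ^ 2) • (1 : A)
  rel_c1 : star z11 * z21 - (q : ℂ) • (z21 * star z11)
    = ((q : ℂ) - (q : ℂ)⁻¹) • (z22 * star z12)
  rel_c2 : star z11 * z12 - (q : ℂ) • (z12 * star z11)
    = ((q : ℂ) - (q : ℂ)⁻¹) • (z22 * star z21)
  rel_c3 : star z11 * z22 = z22 * star z11
  rel_c4 : star z22 * z21 = (q : ℂ) • (z21 * star z22)
  rel_c5 : star z22 * z12 = (q : ℂ) • (z12 * star z22)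
  rel_c6 : star z21 * z12 = z12 * star z21


private lemma commute_key {A : Type*} [Ring A] [Algebra ℂ A] [StarRing A]
    [StarModule ℂ A] (r : ℂ) (a c : A)
    (h1 : a * c = r • (c * a))
    (h2 : star c * a = r • (a * star c))
    (h3 : star a * c = r • (c * star a))
    (h4 : star c * star a = r • (star a * star c)) :
    Commute (a * star a) (c * star c) := by
  unfold Commute SemiconjBy
  have L : a * star a * (c * star c) = (r * r) • (c * (a * (star a * star c))) := by
    calc a * star a * (c * star c)
        = a * ((star a * c) * star c) := by rw [mul_assoc, mul_assoc]
      _ = a * ((r • (c * star a)) * star c) := by rw [h3]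
      _ = r • ((a * c) * (star a * star c)) := by
          simp only [smul_mul_assoc, mul_smul_comm, mul_assoc]
      _ = r • ((r • (c * a)) * (star a * star c)) := by rw [h1]
      _ = (r * r) • (c * (a * (star a * star c))) := by
          simp only [smul_mul_assoc, smul_smul, mul_assoc]
  have R : c * star c * (a * star a) = (r * r) • (c * (a * (star a * star c))) := by
    calc c * star c * (a * star a)
        = c * ((star c * a) * star a) := by rw [mul_assoc, mul_assoc]
      _ = c * ((r • (a * star c)) * star a) := by rw [h2]
      _ = r • (c * (a * (star c * star a))) := by
          simp only [smul_mul_assoc, mul_smul_comm, mul_assoc]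
      _ = r • (c * (a * (r • (star a * star c)))) := by rw [h4]
      _ = (r * r) • (c * (a * (star a * star c))) := by
          simp only [smul_mul_assoc, mul_smul_comm, smul_smul, mul_assoc]
  rw [L, R]

/-- In `Pol(Mat₂,₂)_q`, the elements `z₂¹(z₂¹)*`, `z₁²(z₁²)*`, `z₂²(z₂²)*`
pairwise commute. -/
theorem stmt_14 (q : ℝ) (hq0 : 0 < q) (hq1 : q < 1)
    {A : Type*} [Ring A] [Algebra ℂ A] [StarRing A] [StarModule ℂ A]
    (P : PolMat22 q A) :
    Commute (P.z21 * star P.z21) (P.z12 * star P.z12) ∧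
    Commute (P.z21 * star P.z21) (P.z22 * star P.z22) ∧
    Commute (P.z12 * star P.z12) (P.z22 * star P.z22) := by
  obtain ⟨z11, z21, z12, z22, a1, a2, a3, a4, a5, a6, b1, b2, b3, b4,
    c1, c2, c3, c4, c5, c6⟩ := P
  simp only at *
  have sa3 := congrArg star a3
  have sa4 := congrArg star a4
  have sa5 := congrArg star a5
  have sc4 := congrArg star c4
  have sc5 := congrArg star c5
  have sc6 := congrArg star c6
  simp only [star_mul, star_smul, Complex.star_def, Complex.conj_ofReal,
    star_star] at sa3 sa4 sa5 sc4 sc5 sc6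
  refine ⟨?_, ?_, ?_⟩
  · exact commute_key 1 z21 z12 (by simpa using a3) (by simpa using sc6)
      (by simpa using c6) (by simpa using sa3)
  · exact commute_key (q : ℂ) z21 z22 a4 c4 sc4 sa4
  · exact commute_key (q : ℂ) z12 z22 a5 c5 sc5 sa5
end

section
/- In the *-algebra Pol(Mat_{2,2})_q, for each (a,α) in {(2,1),(1,2),(2,2)} the element z_a^α (z_a^α)* satisfies: (z_a^α (z_a^α)*) z11 = z11 (z_a^α (z_a^α)*) - (-1)^(a+α) (q - q^(-1)) z21 z12 z22*. -/
/-- Relation (7) of the paper: for `(a,α) ∈ {(2,1),(1,2),(2,2)}`,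
`z_aᵅ(z_aᵅ)* z₁¹ = z₁¹ z_aᵅ(z_aᵅ)* − (−1)^{a+α}(q−q⁻¹) z₂¹ z₁² (z₂²)*`. -/
theorem stmt_16 (q : ℝ) (hq0 : 0 < q) (hq1 : q < 1)
    {A : Type*} [Ring A] [Algebra ℂ A] [StarRing A] [StarModule ℂ A]
    (P : PolMat22 q A) :
    P.z21 * star P.z21 * P.z11 = P.z11 * (P.z21 * star P.z21)
      + ((q : ℂ) - (q : ℂ)⁻¹) • (P.z21 * P.z12 * star P.z22) ∧
    P.z12 * star P.z12 * P.z11 = P.z11 * (P.z12 * star P.z12)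
      + ((q : ℂ) - (q : ℂ)⁻¹) • (P.z21 * P.z12 * star P.z22) ∧
    P.z22 * star P.z22 * P.z11 = P.z11 * (P.z22 * star P.z22)
      - ((q : ℂ) - (q : ℂ)⁻¹) • (P.z21 * P.z12 * star P.z22) := by

  obtain ⟨z11, z21, z12, z22, a1, a2, a3, a4, a5, a6, b1, b2, b3, b4,
    c1, c2, c3, c4, c5, c6⟩ := P
  simp only
  have starq : ∀ c : ℂ, ∀ x y : A, star (c • (x * y)) = (starRingEnd ℂ) c • (star y * star x) := by
    intro c x y; rw [star_smul, star_mul]; rfl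
  -- starred versions of the c-relations
  have h1 : star z21 * z11 = (q : ℂ) • (z11 * star z21)
      + ((q : ℂ) - (q : ℂ)⁻¹) • (z12 * star z22) := by
    have := congrArg star c1
    simp only [star_sub, star_mul, star_star, starq, map_sub, map_inv₀,
      Complex.conj_ofReal] at this
    rw [sub_eq_iff_eq_add] at this
    rw [this, add_comm]
  have h2 : star z12 * z11 = (q : ℂ) • (z11 * star z12)
      + ((q : ℂ) - (q : ℂ)⁻¹) • (z21 * star z22) := by
    have := congrArg star c2
    simp only [star_sub, star_mul, star_star, starq, map_sub, map_inv₀,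
      Complex.conj_ofReal] at this
    rw [sub_eq_iff_eq_add] at this
    rw [this, add_comm]
  have h3 : star z22 * z11 = z11 * star z22 := by
    have := congrArg star c3
    simpa only [star_mul, star_star] using this
  refine ⟨?_, ?_, ?_⟩
  · calc z21 * star z21 * z11 = z21 * (star z21 * z11) := mul_assoc _ _ _
      _ = z21 * ((q : ℂ) • (z11 * star z21) + ((q : ℂ) - (q : ℂ)⁻¹) • (z12 * star z22)) := by
          rw [h1]
      _ = (q : ℂ) • (z21 * z11) * star z21
          + ((q : ℂ) - (q : ℂ)⁻¹) • (z21 * z12 * star z22) := by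
          simp only [mul_add, mul_smul_comm, smul_mul_assoc, mul_assoc]
      _ = z11 * (z21 * star z21) + ((q : ℂ) - (q : ℂ)⁻¹) • (z21 * z12 * star z22) := by
          rw [← a1, mul_assoc]
  · calc z12 * star z12 * z11 = z12 * (star z12 * z11) := mul_assoc _ _ _
      _ = z12 * ((q : ℂ) • (z11 * star z12) + ((q : ℂ) - (q : ℂ)⁻¹) • (z21 * star z22)) := by
          rw [h2]
      _ = (q : ℂ) • (z12 * z11) * star z12
          + ((q : ℂ) - (q : ℂ)⁻¹) • (z12 * z21 * star z22) := by
          simp only [mul_add, mul_smul_comm, smul_mul_assoc, mul_assoc]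
      _ = z11 * (z12 * star z12) + ((q : ℂ) - (q : ℂ)⁻¹) • (z21 * z12 * star z22) := by
          rw [← a2, mul_assoc, ← a3]
  · calc z22 * star z22 * z11 = z22 * (star z22 * z11) := mul_assoc _ _ _
      _ = z22 * z11 * star z22 := by rw [h3, mul_assoc]
      _ = (z11 * z22 - ((q : ℂ) - (q : ℂ)⁻¹) • (z12 * z21)) * star z22 := by
          have a6' : z22 * z11 = z11 * z22 - ((q : ℂ) - (q : ℂ)⁻¹) • (z12 * z21) := by
            rw [← a6]; abel
          rw [a6']
      _ = z11 * (z22 * star z22) - ((q : ℂ) - (q : ℂ)⁻¹) • (z21 * z12 * star z22) := by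
          rw [sub_mul, smul_mul_assoc, mul_assoc, ← a3]
end
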